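/- arXiv:2112.13909 — 2 statements merged into one kernel-verified Lean document; each statement's English description precedes it below -/
import Mathlib

section
/- Let d ∈ U_k be a canonical r-cycle permuting blocks A_1,...,A_r all of size k/r (so d sends A_i to A_{i+1} cyclically, with A_i consisting of consecutive integers). If d' is obtained from d by taking unions of blocks so that top(d') = bot(d'), then d' is an s-cycle for some divisor s of r, and all blocks of top(d') have size k/s. -/
open Sum

/-- A set partition `d` of `[k] ∪ [k̄]` (encoded as a setoid on `Fin k ⊕ Fin k`,
top row = `inl`, bottom row = `inr`) is *uniform* if every block contains as many
top-row elements as bottom-row elements. -/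
def IsUniform (k : ℕ) (d : Setoid (Fin k ⊕ Fin k)) : Prop :=
  ∀ x : Fin k ⊕ Fin k,
    {a : Fin k | d.r (.inl a) x}.ncard = {b : Fin k | d.r (.inr b) x}.ncard

/-- Embedding of a two-row diagram into the top two rows of a three-row diagram. -/
def row12 (k : ℕ) : Fin k ⊕ Fin k → Fin k ⊕ (Fin k ⊕ Fin k) :=
  Sum.elim (fun a => .inl a) (fun b => .inr (.inl b))

/-- Embedding of a two-row diagram into the bottom two rows of a three-row diagram. -/
def row23 (k : ℕ) : Fin k ⊕ Fin k → Fin k ⊕ (Fin k ⊕ Fin k) :=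
  Sum.elim (fun a => .inr (.inl a)) (fun b => .inr (.inr b))

/-- Embedding of a two-row diagram into the outer two rows of a three-row diagram. -/
def row13 (k : ℕ) : Fin k ⊕ Fin k → Fin k ⊕ (Fin k ⊕ Fin k) :=
  Sum.elim (fun a => .inl a) (fun b => .inr (.inr b))

/-- The equivalence relation on the three-row vertex set generated by transporting
`d` along the embedding `f`. -/
def liftSetoid (k : ℕ) (f : Fin k ⊕ Fin k → Fin k ⊕ (Fin k ⊕ Fin k))
    (d : Setoid (Fin k ⊕ Fin k)) : Setoid (Fin k ⊕ (Fin k ⊕ Fin k)) :=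
  Relation.EqvGen.setoid (fun x y => ∃ a b, d.r a b ∧ x = f a ∧ y = f b)

/-- The diagram product: stack `d` on top of `d'`, take connected components of the
three-row diagram, and restrict to the outer rows. -/
def ubpMul {k : ℕ} (d d' : Setoid (Fin k ⊕ Fin k)) : Setoid (Fin k ⊕ Fin k) :=
  Setoid.comap (row13 k) (liftSetoid k (row12 k) d ⊔ liftSetoid k (row23 k) d')

/-- The identity diagram `{{1,1̄},…,{k,k̄}}`. -/
def ubpOne (k : ℕ) : Setoid (Fin k ⊕ Fin k) := Setoid.ker (Sum.elim id id)

/-- The set partition of `[k]` induced on the top row. -/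
def topPart {k : ℕ} (d : Setoid (Fin k ⊕ Fin k)) : Setoid (Fin k) :=
  Setoid.comap Sum.inl d

/-- The set partition of `[k]` induced on the bottom row. -/
def botPart {k : ℕ} (d : Setoid (Fin k ⊕ Fin k)) : Setoid (Fin k) :=
  Setoid.comap Sum.inr d

/-- The idempotent diagram `e_π = {A ∪ Ā : A ∈ π}` associated to a set partition `π` of `[k]`. -/
def ePart {k : ℕ} (π : Setoid (Fin k)) : Setoid (Fin k ⊕ Fin k) :=
  Setoid.comap (Sum.elim id id) π

/-- The diagram `{{i, σ(i)‾} : i ∈ [k]}` of a permutation `σ ∈ S_k`. -/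
def permToUBP {k : ℕ} (σ : Equiv.Perm (Fin k)) : Setoid (Fin k ⊕ Fin k) :=
  Setoid.ker (Sum.elim (fun i => σ i) id)

/-- The reflection `d̃` of a diagram across a horizontal line (swap barred/unbarred). -/
def reflectUBP {k : ℕ} (d : Setoid (Fin k ⊕ Fin k)) : Setoid (Fin k ⊕ Fin k) :=
  Setoid.comap Sum.swap d

/-- The image of a set `C ⊆ [k]` of top-row elements under the block bijection of `d`:
the set of bottom-row elements connected to some element of `C`. -/
def blockMap {k : ℕ} (d : Setoid (Fin k ⊕ Fin k)) (C : Set (Fin k)) : Set (Fin k) :=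
  {j | ∃ i ∈ C, d.r (.inl i) (.inr j)}

/-- Let `d` be the canonical `r`-cycle on blocks
`A_i = {x : x/(k/r) = i}` of consecutive integers, each of size `k/r` (encoded as the
kernel of the displayed block-index function).  If `d'` is a coarsening of `d`
(every block of `d'` is a union of blocks of `d`) with `top(d') = bot(d')`, then
`d'` is an `s`-cycle for some divisor `s` of `r`, all of whose blocks have size
`k/s`. -/
theorem canonical_cycle_coarsening (k r : ℕ) (hk : 0 < k) (hr : 0 < r) (hdvd : r ∣ k)
    (d : Setoid (Fin k ⊕ Fin k))
    (hd : d = Setoid.ker (Sum.elim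
        (fun x : Fin k => (x : ℕ) / (k / r) % r)
        (fun y : Fin k => ((y : ℕ) / (k / r) + (r - 1)) % r)))
    (d' : Setoid (Fin k ⊕ Fin k)) (hle : d ≤ d') (htb : topPart d' = botPart d') :
    ∃ s : ℕ, s ∣ r ∧ ∃ hs : 0 < s, ∃ B : Fin s → Set (Fin k),
      Function.Injective B ∧
      (topPart d').classes = Set.range B ∧
      (∀ i, (B i).ncard = k / s) ∧
      ∀ i : Fin s, blockMap d' (B i) = B ⟨((i : ℕ) + 1) % s, Nat.mod_lt _ hs⟩ := by
  classical
  subst hd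
  set m := k / r with hm_def
  have hm : 0 < m := Nat.div_pos (Nat.le_of_dvd hk hdvd) hr
  have hk' : k = m * r := (Nat.div_mul_cancel hdvd).symm
  have hbound : ∀ i : ℕ, i % r * m < k := by
    intro i
    calc i % r * m < r * m := (Nat.mul_lt_mul_right hm).mpr (Nat.mod_lt _ hr)
      _ = k := by rw [hk', Nat.mul_comm]
  set e : ℕ → Fin k := fun i => ⟨i % r * m, hbound i⟩ with he_def
  set q : Fin k → ℕ := fun x => (x : ℕ) / m with hq_def
  have hq : ∀ x : Fin k, q x < r := by
    intro x
    exact (Nat.div_lt_iff_lt_mul hm).mpr (by rw [Nat.mul_comm, ← hk']; exact x.isLt)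
  have hqe : ∀ i : ℕ, q (e i) = i % r := fun i => Nat.mul_div_cancel _ hm
  have he_mod : ∀ i : ℕ, e (i % r) = e i := by
    intro i
    apply Fin.ext
    show i % r % r * m = i % r * m
    rw [Nat.mod_mod_of_dvd i dvd_rfl]
  have he_addr : ∀ i : ℕ, e (i + r) = e i := by
    intro i
    apply Fin.ext
    show (i + r) % r * m = i % r * m
    rw [Nat.add_mod_right]
  -- basic relations from d ≤ d'
  have hD1 : ∀ x y : Fin k, (x : ℕ) / m % r = (y : ℕ) / m % r → d'.r (.inl x) (.inl y) :=
    fun x y h => Setoid.le_def.mp hle (x := Sum.inl x) (y := Sum.inl y) h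
  have hD2 : ∀ x y : Fin k, (x : ℕ) / m % r = ((y : ℕ) / m + (r - 1)) % r →
      d'.r (.inl x) (.inr y) :=
    fun x y h => Setoid.le_def.mp hle (x := Sum.inl x) (y := Sum.inr y) h
  have hD3 : ∀ x y : Fin k, ((x : ℕ) / m + (r - 1)) % r = ((y : ℕ) / m + (r - 1)) % r →
      d'.r (.inr x) (.inr y) :=
    fun x y h => Setoid.le_def.mp hle (x := Sum.inr x) (y := Sum.inr y) h
  have h1 : ∀ x : Fin k, d'.r (.inl x) (.inl (e (q x))) := by
    intro x
    apply hD1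
    show q x % r = q (e (q x)) % r
    rw [hqe, Nat.mod_mod_of_dvd _ dvd_rfl]
  have h2 : ∀ y : Fin k, d'.r (.inr y) (.inr (e (q y))) := by
    intro y
    apply hD3
    show (q y + (r - 1)) % r = (q (e (q y)) + (r - 1)) % r
    rw [hqe, Nat.mod_add_mod]
  have h3 : ∀ i : ℕ, d'.r (.inl (e i)) (.inr (e (i + 1))) := by
    intro i
    apply hD2
    show q (e i) % r = (q (e (i + 1)) + (r - 1)) % r
    rw [hqe, hqe, Nat.mod_mod_of_dvd _ dvd_rfl, Nat.mod_add_mod,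
      show i + 1 + (r - 1) = i + r by omega, Nat.add_mod_right]
  set P : ℕ → ℕ → Prop := fun i j => d'.r (.inl (e i)) (.inl (e j)) with hP_def
  have Prefl : ∀ i, P i i := fun i => d'.iseqv.refl _
  have Psymm : ∀ {i j}, P i j → P j i := fun h => d'.iseqv.symm h
  have Ptrans : ∀ {i j l}, P i j → P j l → P i l := fun h h' => d'.iseqv.trans h h'
  have htb' : ∀ a b : Fin k, d'.r (.inr a) (.inr b) → d'.r (.inl a) (.inl b) := by
    intro a b h
    have hb : (botPart d') a b := h
    rw [← htb] at hb
    exact hb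
  have hshift : ∀ i j, P i j → P (i + 1) (j + 1) := by
    intro i j h
    exact htb' _ _ (d'.iseqv.trans (d'.iseqv.symm (h3 i)) (d'.iseqv.trans h (h3 j)))
  have hshiftn : ∀ n i j, P i j → P (i + n) (j + n) := by
    intro n
    induction n with
    | zero => intro i j h; simpa using h
    | succ n ih =>
      intro i j h
      have := hshift _ _ (ih i j h)
      simpa [Nat.add_assoc] using this
  have hunshift : ∀ i j, P (i + 1) (j + 1) → P i j := by
    intro i j h
    have h2 := hshiftn (r - 1) _ _ h
    rw [show i + 1 + (r - 1) = i + r by omega, show j + 1 + (r - 1) = j + r by omega] at h2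
    show d'.r (.inl (e i)) (.inl (e j))
    rw [← he_addr i, ← he_addr j]
    exact h2
  have hunshiftn : ∀ n i j, P (i + n) (j + n) → P i j := by
    intro n
    induction n with
    | zero => intro i j h; simpa using h
    | succ n ih =>
      intro i j h
      apply ih
      apply hunshift
      simpa [Nat.add_assoc] using h
  have hP0r : P 0 r := by
    have her : e r = e 0 := by have h := he_addr 0; rwa [Nat.zero_add] at h
    show d'.r (.inl (e 0)) (.inl (e r))
    rw [her]
  have hs_ex : ∃ n, 0 < n ∧ P 0 n := ⟨r, hr, hP0r⟩
  set s := Nat.find hs_ex with hs_def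
  have hs0 : 0 < s := (Nat.find_spec hs_ex).1
  have hP0s : P 0 s := (Nat.find_spec hs_ex).2
  have hadd : ∀ a b, P 0 a → P 0 b → P 0 (a + b) := by
    intro a b ha hb
    have := hshiftn a 0 b hb
    rw [Nat.zero_add, Nat.add_comm] at this
    exact Ptrans ha this
  have hmul : ∀ c, P 0 (s * c) := by
    intro c
    induction c with
    | zero => simpa using Prefl 0
    | succ c ih =>
      have := hadd _ _ ih hP0s
      rwa [show s * c + s = s * (c + 1) by ring] at this
  have hdvd_of : ∀ n, P 0 n → s ∣ n := by
    intro n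
    induction n using Nat.strong_induction_on with
    | _ n ih =>
      intro hn
      rcases Nat.eq_zero_or_pos n with h0 | h0
      · simp [h0]
      · have hsn : s ≤ n := Nat.find_min' hs_ex ⟨h0, hn⟩
        have hsub : P 0 (n - s) := by
          have h' := hshiftn (n - s) 0 s hP0s
          rw [Nat.zero_add, show s + (n - s) = n by omega] at h'
          exact Ptrans hn (Psymm h')
        have := ih (n - s) (by omega) hsub
        have h2 : s ∣ n - s + s := Dvd.dvd.add this dvd_rfl
        rwa [Nat.sub_add_cancel hsn] at h2
  have hsr : s ∣ r := hdvd_of r hP0r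
  obtain ⟨t, ht⟩ := hsr
  have hsler : s ≤ r := Nat.le_of_dvd hr ⟨t, ht⟩
  have hks2 : k = m * s * t := by rw [hk', ht]; ring
  have hPiff : ∀ i j, P i j ↔ i % s = j % s := by
    intro i j
    constructor
    · intro h
      rcases Nat.le_total i j with hij | hij
      · have h0 : P 0 (j - i) := hunshiftn i 0 (j - i) (by
          rw [Nat.zero_add, Nat.sub_add_cancel hij]; exact h)
        exact (Nat.modEq_iff_dvd' hij).mpr (hdvd_of _ h0)
      · have h0 : P 0 (i - j) := hunshiftn j 0 (i - j) (by
          rw [Nat.zero_add, Nat.sub_add_cancel hij]; exact Psymm h)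
        exact ((Nat.modEq_iff_dvd' hij).mpr (hdvd_of _ h0)).symm
    · intro h
      rcases Nat.le_total i j with hij | hij
      · obtain ⟨c, hc⟩ := (Nat.modEq_iff_dvd' hij).mp h
        have hp := hshiftn i 0 (s * c) (hmul c)
        rw [Nat.zero_add, show s * c + i = j by omega] at hp
        exact hp
      · obtain ⟨c, hc⟩ := (Nat.modEq_iff_dvd' hij).mp h.symm
        have hp := hshiftn j 0 (s * c) (hmul c)
        rw [Nat.zero_add, show s * c + j = i by omega] at hp
        exact Psymm hp
  have hTop : ∀ x y : Fin k, d'.r (.inl x) (.inl y) ↔ q x % s = q y % s := by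
    intro x y
    constructor
    · intro h
      have hP : P (q x) (q y) :=
        d'.iseqv.trans (d'.iseqv.symm (h1 x)) (d'.iseqv.trans h (h1 y))
      exact (hPiff _ _).mp hP
    · intro h
      exact d'.iseqv.trans (h1 x) (d'.iseqv.trans ((hPiff _ _).mpr h) (d'.iseqv.symm (h1 y)))
  have harith : ∀ a b : ℕ, a % s = (b + (r - 1)) % s ↔ (a + 1) % s = b % s := by
    intro a b
    constructor
    · intro h
      have h' : (a + 1) % s = (b + (r - 1) + 1) % s := Nat.ModEq.add_right 1 h
      rw [h', show b + (r - 1) + 1 = b + s * t by omega, Nat.add_mul_mod_self_left]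
    · intro h
      have h' : (b + (r - 1)) % s = (a + 1 + (r - 1)) % s := Nat.ModEq.add_right (r - 1) h.symm
      rw [h', show a + 1 + (r - 1) = a + s * t by omega, Nat.add_mul_mod_self_left]
  have hMix : ∀ x y : Fin k, d'.r (.inl x) (.inr y) ↔ (q x + 1) % s = q y % s := by
    intro x y
    have hrel : d'.r (.inr (e (q y))) (.inl (e (q y + (r - 1)))) := by
      have h' := h3 (q y + (r - 1))
      rw [show q y + (r - 1) + 1 = q y + r by omega, he_addr] at h'
      exact d'.iseqv.symm h'
    constructor
    · intro h
      have hP : P (q x) (q y + (r - 1)) :=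
        d'.iseqv.trans (d'.iseqv.symm (h1 x))
          (d'.iseqv.trans h (d'.iseqv.trans (h2 y) hrel))
      exact (harith _ _).mp ((hPiff _ _).mp hP)
    · intro h
      have hP : P (q x) (q y + (r - 1)) := (hPiff _ _).mpr ((harith _ _).mpr h)
      exact d'.iseqv.trans (h1 x)
        (d'.iseqv.trans hP (d'.iseqv.trans (d'.iseqv.symm hrel) (d'.iseqv.symm (h2 y))))
  set B : Fin s → Set (Fin k) := fun i => {x : Fin k | q x % s = (i : ℕ)} with hB_def
  have heB : ∀ i : Fin s, q (e (i : ℕ)) % s = (i : ℕ) := by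
    intro i
    rw [hqe, Nat.mod_eq_of_lt (lt_of_lt_of_le i.isLt hsler), Nat.mod_eq_of_lt i.isLt]
  refine ⟨s, ⟨t, ht⟩, hs0, B, ?_, ?_, ?_, ?_⟩
  · -- injective
    intro i j hij
    apply Fin.ext
    have h1' : e (i : ℕ) ∈ B i := heB i
    rw [hij] at h1'
    exact (heB i).symm.trans h1'
  · -- classes
    ext C
    constructor
    · rintro ⟨y, rfl⟩
      refine ⟨⟨q y % s, Nat.mod_lt _ hs0⟩, ?_⟩
      ext x
      constructor
      · intro hx
        have hx' : q x % s = q y % s := hx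
        show d'.r (.inl x) (.inl y)
        exact (hTop x y).mpr hx'
      · intro hx
        have hx' : d'.r (.inl x) (.inl y) := hx
        show q x % s = q y % s
        exact (hTop x y).mp hx'
    · rintro ⟨i, rfl⟩
      refine ⟨e (i : ℕ), ?_⟩
      ext x
      constructor
      · intro hx
        have hx' : q x % s = (i : ℕ) := hx
        show d'.r (.inl x) (.inl (e (i : ℕ)))
        exact (hTop _ _).mpr (by rw [heB]; exact hx')
      · intro hx
        have hx' : d'.r (.inl x) (.inl (e (i : ℕ))) := hx
        show q x % s = (i : ℕ)
        rw [← heB i]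
        exact (hTop _ _).mp hx'
  · -- cardinality
    intro i
    have hks : k / s = t * m := by
      rw [hks2, show m * s * t = t * m * s by ring, Nat.mul_div_cancel _ hs0]
    have hlt1 : ∀ b : Fin m, m * (i : ℕ) + (b : ℕ) < m * s := by
      intro b
      calc m * (i : ℕ) + (b : ℕ) < m * (i : ℕ) + m := by omega
        _ = m * ((i : ℕ) + 1) := by ring
        _ ≤ m * s := Nat.mul_le_mul_left m i.isLt
    have hlt : ∀ (a : Fin t) (b : Fin m), m * s * (a : ℕ) + m * (i : ℕ) + (b : ℕ) < k := by
      intro a b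
      calc m * s * (a : ℕ) + m * (i : ℕ) + (b : ℕ) < m * s * (a : ℕ) + m * s := by
            have := hlt1 b; omega
        _ = m * s * ((a : ℕ) + 1) := by ring
        _ ≤ m * s * t := Nat.mul_le_mul_left _ a.isLt
        _ = k := hks2.symm
    have hmem : ∀ (a : Fin t) (b : Fin m),
        (m * s * (a : ℕ) + m * (i : ℕ) + (b : ℕ)) / m % s = (i : ℕ) := by
      intro a b
      rw [show m * s * (a : ℕ) + m * (i : ℕ) + (b : ℕ)
          = m * (s * (a : ℕ) + (i : ℕ)) + (b : ℕ) by ring,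
        Nat.mul_add_div hm, Nat.div_eq_of_lt b.isLt, Nat.add_zero,
        Nat.mul_add_mod, Nat.mod_eq_of_lt i.isLt]
    have hFbound : ∀ x : ↥(B i), (x.1 : ℕ) / (m * s) < t := by
      intro x
      apply (Nat.div_lt_iff_lt_mul (Nat.mul_pos hm hs0)).mpr
      calc (x.1 : ℕ) < k := x.1.isLt
        _ = t * (m * s) := by rw [hks2]; ring
    have hcardeq : Nat.card ↥(B i) = Nat.card (Fin t × Fin m) := by
      refine Nat.card_congr
        ⟨fun x => (⟨(x.1 : ℕ) / (m * s), hFbound x⟩, ⟨(x.1 : ℕ) % m, Nat.mod_lt _ hm⟩),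
         fun p => ⟨⟨m * s * (p.1 : ℕ) + m * (i : ℕ) + (p.2 : ℕ), hlt p.1 p.2⟩, hmem p.1 p.2⟩,
         ?_, ?_⟩
      rintro ⟨x, hx⟩
      have hx' : (x : ℕ) / m % s = (i : ℕ) := hx
      apply Subtype.ext
      apply Fin.ext
      show m * s * ((x : ℕ) / (m * s)) + m * (i : ℕ) + (x : ℕ) % m = (x : ℕ)
      have e1 : (x : ℕ) / (m * s) = (x : ℕ) / m / s := (Nat.div_div_eq_div_mul _ _ _).symm
      have e2 : s * ((x : ℕ) / m / s) + (x : ℕ) / m % s = (x : ℕ) / m := Nat.div_add_mod _ s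
      have e3 : m * ((x : ℕ) / m) + (x : ℕ) % m = (x : ℕ) := Nat.div_add_mod _ m
      calc m * s * ((x : ℕ) / (m * s)) + m * (i : ℕ) + (x : ℕ) % m
          = m * (s * ((x : ℕ) / m / s) + (x : ℕ) / m % s) + (x : ℕ) % m := by
            rw [e1, ← hx']; ring
        _ = m * ((x : ℕ) / m) + (x : ℕ) % m := by rw [e2]
        _ = (x : ℕ) := e3
      rintro ⟨a, b⟩
      have c1 : (m * s * (a : ℕ) + m * (i : ℕ) + (b : ℕ)) / (m * s) = (a : ℕ) := by
        rw [show m * s * (a : ℕ) + m * (i : ℕ) + (b : ℕ)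
            = m * s * (a : ℕ) + (m * (i : ℕ) + (b : ℕ)) by ring,
          Nat.mul_add_div (Nat.mul_pos hm hs0), Nat.div_eq_of_lt (hlt1 b), Nat.add_zero]
      have c2 : (m * s * (a : ℕ) + m * (i : ℕ) + (b : ℕ)) % m = (b : ℕ) := by
        rw [show m * s * (a : ℕ) + m * (i : ℕ) + (b : ℕ)
            = m * (s * (a : ℕ) + (i : ℕ)) + (b : ℕ) by ring,
          Nat.mul_add_mod, Nat.mod_eq_of_lt b.isLt]
      apply Prod.ext <;> apply Fin.ext
      · exact c1
      · exact c2
    rw [← Nat.card_coe_set_eq, hcardeq]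
    simp [hks]
  · -- blockMap
    intro i
    ext j
    constructor
    · rintro ⟨x, hx, hrel⟩
      have h := (hMix x j).mp hrel
      have hx' : q x % s = (i : ℕ) := hx
      show q j % s = ((i : ℕ) + 1) % s
      calc q j % s = (q x + 1) % s := h.symm
        _ = (q x % s + 1) % s := (Nat.mod_add_mod _ _ _).symm
        _ = ((i : ℕ) + 1) % s := by rw [hx']
    · intro hj
      have hj' : q j % s = ((i : ℕ) + 1) % s := hj
      refine ⟨e (i : ℕ), heB i, ?_⟩
      apply (hMix _ _).mpr
      rw [hqe, Nat.mod_eq_of_lt (lt_of_lt_of_le i.isLt hsler)]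
      exact hj'.symm
end

section
/- Let d ∈ U_k consist of t disjoint r-cycles, each permuting r blocks of equal size. Then there are exactly r^{t−1} ways to take unions of the blocks of d to obtain an element d' that is a single r-cycle with top(d') = bot(d'); moreover each block of d' is a disjoint union containing exactly one block from each of the t cycles of d. -/
open Sum

/-!
Index each point by the cycle `c` and the position `i` of the block of `d` containing it, via
`p x = (c, i)`. A single `r`-cycle `d'` with `top d' = bot d'` is determined by the label
`f : [k] → ℤ/r` of its blocks, and `d ≤ d'` forces `f = i + σ c` for a shift vector
`σ : Fin t → ℤ/r`. Shifting all of `σ` by a constant gives the same `d'`, and this is the only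
ambiguity, so the `d'` correspond to the `r ^ (t - 1)` shift vectors with `σ 0 = 0`. The block of
`d'` labelled `j` contains the block `i = j - σ c` of cycle `c`, and no other.
-/

open Function
open scoped Fin.CommRing

lemma Fin.mk_add_one_mod {m : ℕ} (i : Fin (m + 1)) (h : ((i : ℕ) + 1) % (m + 1) < m + 1) :
    (⟨((i : ℕ) + 1) % (m + 1), h⟩ : Fin (m + 1)) = i + 1 := by
  ext
  simp [Fin.val_add, Nat.add_mod]

lemma Nat.card_subtype_apply_eq {ι α : Type*} [Fintype ι] [Fintype α] [DecidableEq α]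
    (i : ι) (a : α) :
    Nat.card {f : ι → α // f i = a} = Fintype.card α ^ (Fintype.card ι - 1) := by
  classical
  rw [Nat.card_eq_fintype_card, Fintype.card_subtype, ← Fintype.piFinset_univ,
    Fintype.card_filter_piFinset_const_eq_of_mem _ _ (Finset.mem_univ a), Finset.card_univ]

lemma exists_preimage_singleton_eq {α ι : Type*} {A : ι → Set α}
    (hdisj : Pairwise (Disjoint on A)) (hcover : ∀ x, ∃ i, x ∈ A i) :
    ∃ p : α → ι, ∀ i, A i = p ⁻¹' {i} := by
  choose p hp using hcover
  refine ⟨p, fun i => Set.ext fun x => ⟨fun hx => ?_, fun hx => hx ▸ hp x⟩⟩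
  by_contra hne
  exact Set.disjoint_left.mp (hdisj hne) (hp x) hx

section CycleDiagram

variable {k m : ℕ}

/-- The `(m + 1)`-cycle with blocks `f⁻¹{i} ∪ (f⁻¹{i + 1})‾`. -/
def cycleDiagram (f : Fin k → Fin (m + 1)) : Setoid (Fin k ⊕ Fin k) :=
  Setoid.ker (Sum.elim f fun y => f y - 1)

/-- `d` is a single `(m + 1)`-cycle, with top blocks `B i` and `B i ↦ B (i + 1)`. -/
def IsCycleWith (d : Setoid (Fin k ⊕ Fin k)) (B : Fin (m + 1) → Set (Fin k)) : Prop :=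
  Injective B ∧ (topPart d).classes = Set.range B ∧
    ∀ i, blockMap d (B i) = B (i + 1)

variable (m) in
def cycleCoarsenings (d : Setoid (Fin k ⊕ Fin k)) : Set (Setoid (Fin k ⊕ Fin k)) :=
  {d' | d ≤ d' ∧ topPart d' = botPart d' ∧
    ∃ B : Fin (m + 1) → Set (Fin k), IsCycleWith d' B}

lemma topPart_cycleDiagram (f : Fin k → Fin (m + 1)) :
    topPart (cycleDiagram f) = Setoid.ker f :=
  rfl

lemma botPart_cycleDiagram (f : Fin k → Fin (m + 1)) :
    botPart (cycleDiagram f) = Setoid.ker f :=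
  Setoid.ext fun _ _ => sub_left_inj

lemma cycleDiagram_add_const (f : Fin k → Fin (m + 1)) (a : Fin (m + 1)) :
    cycleDiagram (fun x => f x + a) = cycleDiagram f := by
  refine Setoid.ext fun u v => show _ = _ ↔ _ = _ from ?_
  rcases u with x | x <;> rcases v with y | y <;> simp only [Sum.elim_inl, Sum.elim_inr] <;>
    exact ⟨fun h => by linear_combination h, fun h => by linear_combination h⟩

lemma isCycleWith_cycleDiagram {f : Fin k → Fin (m + 1)} (hf : Surjective f) :
    IsCycleWith (cycleDiagram f) fun i => f ⁻¹' {i} := by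
  refine ⟨(Set.preimage_injective.mpr hf).comp Set.singleton_injective, ?_, fun i => ?_⟩
  · rw [topPart_cycleDiagram]
    ext C
    constructor
    · rintro ⟨y, rfl⟩
      exact ⟨f y, rfl⟩
    · rintro ⟨i, rfl⟩
      obtain ⟨y, rfl⟩ := hf i
      exact ⟨y, rfl⟩
  · ext j
    refine ⟨fun ⟨x, hx, hxj⟩ => ?_, fun hj => ?_⟩
    · change f x = f j - 1 at hxj
      change f x = i at hx
      change f j = i + 1
      linear_combination hx - hxj
    · obtain ⟨x, rfl⟩ := hf i
      change f j = f x + 1 at hj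
      exact ⟨x, rfl, show f x = f j - 1 by rw [hj]; ring⟩

/-- The label of a point is the index of its top block; `d` is then `cycleDiagram` of it. -/
lemma IsCycleWith.exists_eq_cycleDiagram {d : Setoid (Fin k ⊕ Fin k)}
    {B : Fin (m + 1) → Set (Fin k)} (hB : IsCycleWith d B) (htb : topPart d = botPart d) :
    ∃ f : Fin k → Fin (m + 1), d = cycleDiagram f := by
  obtain ⟨hinj, hcl, hmap⟩ := hB
  have hclass : ∀ x, ∃ i, B i = {z | topPart d z x} := fun x => by
    rw [← Set.mem_range, ← hcl]
    exact Setoid.mem_classes (topPart d) x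
  choose f hf using hclass
  have hBcl : ∀ i, B i ∈ (topPart d).classes := fun i => hcl ▸ Set.mem_range_self i
  have hself : ∀ x, x ∈ B (f x) := fun x => (hf x).symm ▸ (topPart d).refl x
  have hmem : ∀ x i, x ∈ B i ↔ f x = i := fun x i =>
    ⟨fun hx => hinj (Setoid.eq_of_mem_classes (hBcl _) (hself x) (hBcl i) hx),
      fun hx => hx ▸ hself x⟩
  have htop : ∀ x y, topPart d x y ↔ f x = f y := fun x y => by
    rw [← hmem, hf y]
    rfl
  have hmix : ∀ x y, d (.inl x) (.inr y) ↔ f x = f y - 1 := fun x y => by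
    rw [eq_sub_iff_add_eq, eq_comm, ← hmem, ← hmap]
    refine ⟨fun h => ⟨x, (hmem x _).mpr rfl, h⟩, fun ⟨x', hx', h⟩ => d.trans ?_ h⟩
    exact (htop x x').mpr ((hmem x' _).mp hx').symm
  refine ⟨f, Setoid.ext ?_⟩
  rintro (x | x) (y | y)
  · exact htop x y
  · exact hmix x y
  · exact d.comm'.trans ((hmix y x).trans eq_comm)
  · exact (Setoid.ext_iff.mp htb x y).symm.trans ((htop x y).trans sub_left_inj.symm)

end CycleDiagram

section ShiftLabel

variable {k t m : ℕ} (p : Fin k → Fin t × Fin (m + 1))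

/-- The block `(c, i)` of `cyclesDiagram p` containing a point. -/
def blockLabel : Fin k ⊕ Fin k → Fin t × Fin (m + 1) :=
  Sum.elim p fun y => ((p y).1, (p y).2 - 1)

/-- The `t` disjoint `(m + 1)`-cycles with blocks `p⁻¹{(c, i)} ∪ (p⁻¹{(c, i + 1)})‾`. -/
def cyclesDiagram : Setoid (Fin k ⊕ Fin k) :=
  Setoid.ker (blockLabel p)

def shiftLabel (σ : Fin t → Fin (m + 1)) (x : Fin k) : Fin (m + 1) :=
  (p x).2 + σ (p x).1

lemma cyclesDiagram_rel_iff (u v : Fin k ⊕ Fin k) :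
    cyclesDiagram p u v ↔ ∃ c i,
      Sum.elim (fun x => p x = (c, i)) (fun y => p y = (c, i + 1)) u ∧
      Sum.elim (fun x => p x = (c, i)) (fun y => p y = (c, i + 1)) v := by
  have hblock : ∀ c i w, Sum.elim (fun x => p x = (c, i)) (fun y => p y = (c, i + 1)) w ↔
      blockLabel p w = (c, i) := by
    rintro c i (x | y)
    · rfl
    · simp only [blockLabel, Sum.elim_inr, Prod.ext_iff, sub_eq_iff_eq_add]
  simp only [hblock]
  exact ⟨fun h => ⟨_, _, h, rfl⟩, fun ⟨_, _, hu, hv⟩ => hu.trans hv.symm⟩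

variable {p}

lemma cyclesDiagram_le_cycleDiagram_iff (hp : Surjective p) {f : Fin k → Fin (m + 1)} :
    cyclesDiagram p ≤ cycleDiagram f ↔ ∃ σ, f = shiftLabel p σ := by
  constructor
  · intro hle
    obtain ⟨q, hpq⟩ := hp.hasRightInverse
    have hrel : ∀ u v, blockLabel p u = blockLabel p v → cycleDiagram f u v :=
      fun u v h => hle h
    have hfq : ∀ x, f x = f (q (p x)) := fun x => hrel (.inl x) (.inl _) (hpq _).symm
    -- `i ↦ f (q (c, i)) - i` is invariant under `i ↦ i + 1`, hence constant.
    have hper : ∀ c, Periodic (fun i => f (q (c, i)) - i) 1 := fun c i => by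
      have h := hrel (.inl (q (c, i))) (.inr (q (c, i + 1))) (by
        simp only [blockLabel, Sum.elim_inl, Sum.elim_inr, hpq (c, i), hpq (c, i + 1)]
        simp)
      change f (q (c, i)) = f (q (c, i + 1)) - 1 at h
      change f (q (c, i + 1)) - (i + 1) = f (q (c, i)) - i
      linear_combination -h
    refine ⟨fun c => f (q (c, 0)), funext fun x => ?_⟩
    have h := (hper (p x).1).nsmul (p x).2.val 0
    rw [zero_add, nsmul_one, Fin.cast_val_eq_self, Prod.mk.eta, ← hfq] at h
    simp only [shiftLabel, sub_zero] at h ⊢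
    linear_combination h
  · rintro ⟨σ, rfl⟩
    have hfactor : ∀ w, Sum.elim (shiftLabel p σ) (fun y => shiftLabel p σ y - 1) w =
        (blockLabel p w).2 + σ (blockLabel p w).1 := by
      rintro (x | y)
      · rfl
      · simp only [blockLabel, shiftLabel, Sum.elim_inr]
        ring
    intro u v (h : blockLabel p u = blockLabel p v)
    change _ = _
    rw [hfactor, hfactor, h]

lemma existsUnique_preimage_subset_of_mem_classes (hp : Surjective p) (σ : Fin t → Fin (m + 1))
    {C : Set (Fin k)} (hC : C ∈ (Setoid.ker (shiftLabel p σ)).classes) (c : Fin t) :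
    ∃! i, p ⁻¹' {(c, i)} ⊆ C := by
  obtain ⟨y, rfl⟩ := hC
  have hsub : ∀ i, p ⁻¹' {(c, i)} ⊆ {z | Setoid.ker (shiftLabel p σ) z y} ↔
      i + σ c = shiftLabel p σ y := fun i => by
    refine ⟨fun h => ?_, fun h x (hx : p x = (c, i)) => ?_⟩
    · obtain ⟨x, hx⟩ := hp (c, i)
      simpa [Setoid.ker_def, shiftLabel, hx] using h hx
    · simpa [Setoid.ker_def, shiftLabel, hx] using h
  simp only [hsub]
  exact ⟨_, sub_add_cancel _ _, fun i h => eq_sub_of_add_eq h⟩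

variable [NeZero t]

lemma shiftLabel_surjective (hp : Surjective p) (σ : Fin t → Fin (m + 1)) :
    Surjective (shiftLabel p σ) := fun j => by
  obtain ⟨x, hx⟩ := hp (0, j - σ 0)
  exact ⟨x, by simp [shiftLabel, hx]⟩

lemma cycleDiagram_shiftLabel_sub_apply_zero (σ : Fin t → Fin (m + 1)) :
    cycleDiagram (shiftLabel p fun c => σ c - σ 0) = cycleDiagram (shiftLabel p σ) := by
  rw [← cycleDiagram_add_const (shiftLabel p σ) (-σ 0)]
  congr 1
  funext x
  simp only [shiftLabel]
  ring

lemma injOn_cycleDiagram_shiftLabel (hp : Surjective p) :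
    Set.InjOn (fun σ => cycleDiagram (shiftLabel p σ))
      {σ : Fin t → Fin (m + 1) | σ 0 = 0} := by
  intro σ (hσ : σ 0 = 0) τ (hτ : τ 0 = 0) h
  have hker : Setoid.ker (shiftLabel p σ) = Setoid.ker (shiftLabel p τ) := by
    rw [← topPart_cycleDiagram, ← topPart_cycleDiagram]
    exact congrArg topPart h
  funext c
  obtain ⟨x, hx⟩ := hp (c, 0)
  obtain ⟨y, hy⟩ := hp (0, σ c)
  have hxy : shiftLabel p σ x = shiftLabel p σ y := by simp [shiftLabel, hx, hy, hσ]
  have hτxy : shiftLabel p τ x = shiftLabel p τ y := (Setoid.ext_iff.mp hker x y).mp hxy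
  simpa [shiftLabel, hx, hy, hτ] using hτxy.symm

lemma cycleCoarsenings_cyclesDiagram (hp : Surjective p) :
    cycleCoarsenings m (cyclesDiagram p) =
      (fun σ => cycleDiagram (shiftLabel p σ)) '' {σ | σ 0 = 0} := by
  ext d'
  constructor
  · rintro ⟨hle, htb, B, hB⟩
    obtain ⟨f, rfl⟩ := hB.exists_eq_cycleDiagram htb
    obtain ⟨σ, rfl⟩ := (cyclesDiagram_le_cycleDiagram_iff hp).mp hle
    exact ⟨_, sub_self (σ 0), cycleDiagram_shiftLabel_sub_apply_zero σ⟩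
  · rintro ⟨σ, -, rfl⟩
    refine ⟨(cyclesDiagram_le_cycleDiagram_iff hp).mpr ⟨σ, rfl⟩, ?_, _,
      isCycleWith_cycleDiagram (shiftLabel_surjective hp σ)⟩
    rw [topPart_cycleDiagram, botPart_cycleDiagram]

lemma card_cycleCoarsenings_cyclesDiagram (hp : Surjective p) :
    Nat.card (cycleCoarsenings m (cyclesDiagram p)) = (m + 1) ^ (t - 1) := by
  rw [cycleCoarsenings_cyclesDiagram hp, Nat.card_image_of_injOn (injOn_cycleDiagram_shiftLabel hp),
    Set.coe_ofPred, Nat.card_subtype_apply_eq, Fintype.card_fin, Fintype.card_fin]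

end ShiftLabel

theorem merge_r_cycles_count_general (k t r : ℕ) (ht : 0 < t) (hr : 0 < r)
    (A : Fin t → Fin r → Set (Fin k))
    (hne : ∀ c i, (A c i).Nonempty)
    (hdisj : ∀ c i c' i', (c, i) ≠ (c', i') → Disjoint (A c i) (A c' i'))
    (hcover : ∀ x : Fin k, ∃ c i, x ∈ A c i)
    (d : Setoid (Fin k ⊕ Fin k))
    (hd : ∀ u v : Fin k ⊕ Fin k, d.r u v ↔ ∃ c : Fin t, ∃ i : Fin r,
      (Sum.elim (fun x => x ∈ A c i)
        (fun y => y ∈ A c ⟨((i : ℕ) + 1) % r, Nat.mod_lt _ hr⟩) u) ∧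
      (Sum.elim (fun x => x ∈ A c i)
        (fun y => y ∈ A c ⟨((i : ℕ) + 1) % r, Nat.mod_lt _ hr⟩) v)) :
    Nat.card {d' : Setoid (Fin k ⊕ Fin k) //
        d ≤ d' ∧ topPart d' = botPart d' ∧
        ∃ B : Fin r → Set (Fin k), Function.Injective B ∧
          (topPart d').classes = Set.range B ∧
          ∀ i : Fin r, blockMap d' (B i) = B ⟨((i : ℕ) + 1) % r, Nat.mod_lt _ hr⟩} =
      r ^ (t - 1) ∧
    ∀ d' : Setoid (Fin k ⊕ Fin k),
      d ≤ d' → topPart d' = botPart d' →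
      (∃ B : Fin r → Set (Fin k), Function.Injective B ∧
        (topPart d').classes = Set.range B ∧
        ∀ i : Fin r, blockMap d' (B i) = B ⟨((i : ℕ) + 1) % r, Nat.mod_lt _ hr⟩) →
      ∀ C ∈ (topPart d').classes, ∀ c : Fin t, ∃! i : Fin r, A c i ⊆ C := by
  obtain ⟨m, rfl⟩ : ∃ m, r = m + 1 := ⟨r - 1, by omega⟩
  have : NeZero t := ⟨ht.ne'⟩
  obtain ⟨p, hA⟩ := exists_preimage_singleton_eq
    (A := fun ci : Fin t × Fin (m + 1) => A ci.1 ci.2)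
    (fun ⟨c, i⟩ ⟨c', i'⟩ h => hdisj c i c' i' h)
    (fun x => (hcover x).elim fun c ⟨i, hx⟩ => ⟨(c, i), hx⟩)
  obtain rfl : A = fun c i => p ⁻¹' {(c, i)} := funext₂ fun c i => hA (c, i)
  have hp : Surjective p := fun ci => hne ci.1 ci.2
  simp only [Fin.mk_add_one_mod, Set.mem_preimage, Set.mem_singleton_iff] at hd
  obtain rfl : d = cyclesDiagram p :=
    Setoid.ext fun u v => (hd u v).trans (cyclesDiagram_rel_iff p u v).symm
  simp only [Fin.mk_add_one_mod]
  refine ⟨card_cycleCoarsenings_cyclesDiagram hp, ?_⟩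
  rintro d' hle htb ⟨B, hB⟩ C hC c
  obtain ⟨σ, -, rfl⟩ := (cycleCoarsenings_cyclesDiagram hp).subset
    (show d' ∈ cycleCoarsenings m _ from ⟨hle, htb, B, hB⟩)
  exact existsUnique_preimage_subset_of_mem_classes hp σ hC c

/-- Let `d ∈ U_k` consist of `t` disjoint `r`-cycles: its blocks are
`A c i ∪ (A c (i+1))‾` for `c : Fin t`, `i : Fin r`, where for each `c` the sets
`A c i` are nonempty, of equal size, and the `A c i` are pairwise disjoint and cover
`[k]`.  Then there are exactly `r^{t-1}` coarsenings `d'` of `d` that are single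
`r`-cycles with `top(d') = bot(d')`, and each block of such a `d'` contains exactly
one block from each of the `t` cycles. -/
theorem merge_r_cycles_count (k t r : ℕ) (ht : 0 < t) (hr : 0 < r)
    (A : Fin t → Fin r → Set (Fin k))
    (hne : ∀ c i, (A c i).Nonempty)
    (hsize : ∀ c i j, (A c i).ncard = (A c j).ncard)
    (hdisj : ∀ c i c' i', (c, i) ≠ (c', i') → Disjoint (A c i) (A c' i'))
    (hcover : ∀ x : Fin k, ∃ c i, x ∈ A c i)
    (d : Setoid (Fin k ⊕ Fin k))
    (hd : ∀ u v : Fin k ⊕ Fin k, d.r u v ↔ ∃ c : Fin t, ∃ i : Fin r,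
      (Sum.elim (fun x => x ∈ A c i)
        (fun y => y ∈ A c ⟨((i : ℕ) + 1) % r, Nat.mod_lt _ hr⟩) u) ∧
      (Sum.elim (fun x => x ∈ A c i)
        (fun y => y ∈ A c ⟨((i : ℕ) + 1) % r, Nat.mod_lt _ hr⟩) v)) :
    Nat.card {d' : Setoid (Fin k ⊕ Fin k) //
        d ≤ d' ∧ topPart d' = botPart d' ∧
        ∃ B : Fin r → Set (Fin k), Function.Injective B ∧
          (topPart d').classes = Set.range B ∧
          ∀ i : Fin r, blockMap d' (B i) = B ⟨((i : ℕ) + 1) % r, Nat.mod_lt _ hr⟩} =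
      r ^ (t - 1) ∧
    ∀ d' : Setoid (Fin k ⊕ Fin k),
      d ≤ d' → topPart d' = botPart d' →
      (∃ B : Fin r → Set (Fin k), Function.Injective B ∧
        (topPart d').classes = Set.range B ∧
        ∀ i : Fin r, blockMap d' (B i) = B ⟨((i : ℕ) + 1) % r, Nat.mod_lt _ hr⟩) →
      ∀ C ∈ (topPart d').classes, ∀ c : Fin t, ∃! i : Fin r, A c i ⊆ C :=
  merge_r_cycles_count_general k t r ht hr A hne hdisj hcover d hd
end
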